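/- Fix integers 1 ≤ a ≤ b ≤ c and r with a+b+1 ≤ r ≤ a+c, and consider N_r^{a,b,c}-bootstrap percolation. Set m = r − (a+b) ≥ 1. For all h, w ≥ c and all sufficiently small p > 0, ℙ_p(I(h+1, w) | I(h, w)) ≥ (1 − exp(−p^{r−a}·w/(r−a)))^{r} · (1 − exp(−p^{m}·w/m))^{2h}. -/

import Mathlib

open scoped Classical

/-- Vertices of the three-dimensional lattice. -/
abbrev V3 : Type := ℤ × ℤ × ℤ

/-- The anisotropic neighbourhood `N_{a,b,c} ⊂ ℤ³`:
nonzero multiples of `e₁` up to `a`, of `e₂` up to `b`, of `e₃` up to `c`. -/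
def N3 (a b c : ℕ) : Set V3 :=
  {u | (u.1 ≠ 0 ∧ |u.1| ≤ (a : ℤ) ∧ u.2.1 = 0 ∧ u.2.2 = 0) ∨
       (u.2.1 ≠ 0 ∧ |u.2.1| ≤ (b : ℤ) ∧ u.1 = 0 ∧ u.2.2 = 0) ∨
       (u.2.2 ≠ 0 ∧ |u.2.2| ≤ (c : ℤ) ∧ u.1 = 0 ∧ u.2.1 = 0)}

/-- One step of the `r`-neighbour bootstrap dynamics inside the region `dom`:
a healthy vertex of `dom` becomes infected when it has at least `r` infected
neighbours (its neighbours being its translates by `N_{a,b,c}`). -/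
def step3 (a b c r : ℕ) (dom S : Set V3) : Set V3 :=
  S ∪ {x | x ∈ dom ∧ r ≤ {u | u ∈ N3 a b c ∧ x + u ∈ S}.ncard}

/-- The closure `⟨A⟩` of `A` under the `N_r^{a,b,c}`-bootstrap process in `dom`. -/
def closure3 (a b c r : ℕ) (dom A : Set V3) : Set V3 :=
  ⋃ n, (step3 a b c r dom)^[n] (A ∩ dom)

/-- The rectangle `[x]×[y]×[z]` as a finset of `ℤ³`. -/
noncomputable def rectF (x y z : ℕ) : Finset V3 :=
  Finset.Icc (1 : ℤ) (x : ℤ) ×ˢ (Finset.Icc (1 : ℤ) (y : ℤ) ×ˢ Finset.Icc (1 : ℤ) (z : ℤ))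

/-- The rectangle `[x]×[y]×[z]` as a set. -/
def rect (x y z : ℕ) : Set V3 := ↑(rectF x y z)

/-- The event `I•(R)`: the region `R` is internally filled by the initial set `A`,
i.e. `R ⊆ ⟨A ∩ R⟩` for the process restricted to `R`. -/
def IFill (a b c r : ℕ) (R : Set V3) (A : Finset V3) : Prop :=
  R ⊆ closure3 a b c r R ↑A

/-- The probability of the event `E` under the Bernoulli product measure with
density `p` on subsets of the finite vertex set `D`. -/
noncomputable def PP {α : Type*} [DecidableEq α] (D : Finset α) (p : ℝ)
    (E : Finset α → Prop) : ℝ :=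
  ∑ A ∈ D.powerset, if E A then p ^ A.card * (1 - p) ^ (D.card - A.card) else 0

/-- Conditional probability `ℙ_p(E | F)`. -/
noncomputable def PPc {α : Type*} [DecidableEq α] (D : Finset α) (p : ℝ)
    (E F : Finset α → Prop) : ℝ :=
  PP D p (fun A => E A ∧ F A) / PP D p F


section ProbCore
variable {α : Type*} [DecidableEq α] {p : ℝ}

lemma sum_w (p : ℝ) (D : Finset α) :
    ∑ A ∈ D.powerset, p ^ A.card * (1 - p) ^ (D.card - A.card) = 1 := by
  induction D using Finset.induction_on with
  | empty => simp
  | @insert a s ha ih =>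
    rw [Finset.sum_powerset_insert ha]
    have h1 : ∀ A ∈ s.powerset, p ^ A.card * (1-p) ^ ((insert a s).card - A.card)
        = (1-p) * (p ^ A.card * (1-p) ^ (s.card - A.card)) := by
      intro A hA
      have hAs : A ⊆ s := Finset.mem_powerset.1 hA
      have hc : A.card ≤ s.card := Finset.card_le_card hAs
      rw [Finset.card_insert_of_notMem ha]
      have h : s.card + 1 - A.card = (s.card - A.card) + 1 := by omega
      rw [h, pow_succ]; ring
    have h2 : ∀ A ∈ s.powerset, p ^ (insert a A).card * (1-p) ^ ((insert a s).card - (insert a A).card)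
        = p * (p ^ A.card * (1-p) ^ (s.card - A.card)) := by
      intro A hA
      have hAs : A ⊆ s := Finset.mem_powerset.1 hA
      have hc : A.card ≤ s.card := Finset.card_le_card hAs
      have haA : a ∉ A := fun h => ha (hAs h)
      rw [Finset.card_insert_of_notMem ha, Finset.card_insert_of_notMem haA]
      have h : s.card + 1 - (A.card + 1) = s.card - A.card := by omega
      rw [h, pow_succ]; ring
    rw [Finset.sum_congr rfl h1, Finset.sum_congr rfl h2, ← Finset.mul_sum, ← Finset.mul_sum, ih]
    ring

lemma wnn (hp0 : 0 ≤ p) (hp1 : p ≤ 1) (k l : ℕ) : 0 ≤ p ^ k * (1 - p) ^ l := by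
  have : (0:ℝ) ≤ 1 - p := by linarith
  positivity

lemma PP_true (D : Finset α) : PP D p (fun _ => True) = 1 := by
  simp only [PP, if_true]; exact sum_w p D

lemma PP_nonneg (hp0 : 0 ≤ p) (hp1 : p ≤ 1) (D : Finset α) (E : Finset α → Prop) :
    0 ≤ PP D p E := by
  apply Finset.sum_nonneg
  intro A _
  split
  · exact wnn hp0 hp1 _ _
  · exact le_refl 0

lemma PP_mono (hp0 : 0 ≤ p) (hp1 : p ≤ 1) (D : Finset α) {E F : Finset α → Prop}
    (h : ∀ A, E A → F A) : PP D p E ≤ PP D p F := by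
  apply Finset.sum_le_sum
  intro A _
  by_cases hE : E A
  · rw [if_pos hE, if_pos (h A hE)]
  · rw [if_neg hE]
    split
    · exact wnn hp0 hp1 _ _
    · exact le_refl 0

lemma PP_congr (D : Finset α) {E F : Finset α → Prop}
    (h : ∀ A ∈ D.powerset, (E A ↔ F A)) : PP D p E = PP D p F := by
  apply Finset.sum_congr rfl
  intro A hA
  by_cases hE : E A
  · rw [if_pos hE, if_pos ((h A hA).1 hE)]
  · rw [if_neg hE, if_neg (fun hF => hE ((h A hA).2 hF))]

lemma PP_add_not (D : Finset α) (E : Finset α → Prop) :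
    PP D p E + PP D p (fun A => ¬ E A) = 1 := by
  have h := sum_w p D
  unfold PP
  rw [← Finset.sum_add_distrib]
  conv_rhs => rw [← h]
  apply Finset.sum_congr rfl
  intro A _
  by_cases hE : E A <;> simp [hE]

lemma PP_not (D : Finset α) (E : Finset α → Prop) :
    PP D p (fun A => ¬ E A) = 1 - PP D p E := by
  have := PP_add_not (p := p) D E; linarith

lemma PP_le_one (hp0 : 0 ≤ p) (hp1 : p ≤ 1) (D : Finset α) (E : Finset α → Prop) :
    PP D p E ≤ 1 := by
  rw [← PP_true (p := p) D]
  exact PP_mono hp0 hp1 D (fun A _ => trivial)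

lemma inter_union_split {A D1 D2 : Finset α} (hA : A ⊆ D1 ∪ D2) :
    (A ∩ D1) ∪ (A ∩ D2) = A := by
  ext x
  simp only [Finset.mem_union, Finset.mem_inter]
  constructor
  · rintro (⟨h1, _⟩ | ⟨h1, _⟩) <;> exact h1
  · intro hx
    rcases Finset.mem_union.1 (hA hx) with h | h
    · exact Or.inl ⟨hx, h⟩
    · exact Or.inr ⟨hx, h⟩

lemma PP_indep (D1 D2 : Finset α) (hd : Disjoint D1 D2) (E1 E2 : Finset α → Prop) :
    PP (D1 ∪ D2) p (fun A => E1 (A ∩ D1) ∧ E2 (A ∩ D2)) = PP D1 p E1 * PP D2 p E2 := by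
  unfold PP
  rw [Finset.sum_mul_sum, ← Finset.sum_product']
  apply Finset.sum_nbij' (i := fun A => (A ∩ D1, A ∩ D2)) (j := fun P => P.1 ∪ P.2)
  · intro A hA
    simp only [Finset.mem_product, Finset.mem_powerset]
    exact ⟨Finset.inter_subset_right, Finset.inter_subset_right⟩
  · intro P hP
    simp only [Finset.mem_product, Finset.mem_powerset] at *
    exact Finset.union_subset_union hP.1 hP.2
  · intro A hA
    exact inter_union_split (Finset.mem_powerset.1 hA)
  · intro P hP
    simp only [Finset.mem_product, Finset.mem_powerset] at hP
    obtain ⟨h1, h2⟩ := hP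
    have e1 : (P.1 ∪ P.2) ∩ D1 = P.1 := by
      rw [Finset.union_inter_distrib_right, Finset.inter_eq_left.2 h1,
        Finset.disjoint_iff_inter_eq_empty.1 (hd.symm.mono_left h2), Finset.union_empty]
    have e2 : (P.1 ∪ P.2) ∩ D2 = P.2 := by
      rw [Finset.union_inter_distrib_right, Finset.inter_eq_left.2 h2,
        Finset.disjoint_iff_inter_eq_empty.1 (hd.mono_left h1), Finset.empty_union]
    rw [e1, e2]
  · intro A hA
    have hA' : A ⊆ D1 ∪ D2 := Finset.mem_powerset.1 hA
    simp only
    have hdisjA : Disjoint (A ∩ D1) (A ∩ D2) :=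
      hd.mono Finset.inter_subset_right Finset.inter_subset_right
    have hcard : A.card = (A ∩ D1).card + (A ∩ D2).card := by
      rw [← Finset.card_union_of_disjoint hdisjA, inter_union_split hA']
    have hc1 : (A ∩ D1).card ≤ D1.card := Finset.card_le_card Finset.inter_subset_right
    have hc2 : (A ∩ D2).card ≤ D2.card := Finset.card_le_card Finset.inter_subset_right
    have hcardD : (D1 ∪ D2).card = D1.card + D2.card := Finset.card_union_of_disjoint hd
    by_cases hE1 : E1 (A ∩ D1) <;> by_cases hE2 : E2 (A ∩ D2) <;>
      simp only [hE1, hE2, and_true, and_false, false_and, if_true, if_false, true_and,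
        if_pos, mul_zero, zero_mul]
    · have : (D1 ∪ D2).card - A.card = (D1.card - (A ∩ D1).card) + (D2.card - (A ∩ D2).card) := by
        omega
      rw [this, hcard, pow_add, pow_add]
      ring

lemma PP_ge_term (hp0 : 0 ≤ p) (hp1 : p ≤ 1) (D : Finset α) (E : Finset α → Prop)
    (A0 : Finset α) (hA0 : A0 ⊆ D) (hE : E A0) :
    p ^ A0.card * (1 - p) ^ (D.card - A0.card) ≤ PP D p E := by
  have := Finset.single_le_sum (f := fun A => if E A then p ^ A.card * (1 - p) ^ (D.card - A.card) else 0)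
    (fun A _ => by split; exacts [wnn hp0 hp1 _ _, le_refl 0]) (Finset.mem_powerset.2 hA0)
  rw [if_pos hE] at this
  unfold PP
  exact this

lemma PP_eq_single (T S : Finset α) (hS : S ⊆ T) :
    PP T p (fun A => A = S) = p ^ S.card * (1 - p) ^ (T.card - S.card) := by
  unfold PP
  rw [Finset.sum_eq_single_of_mem S (Finset.mem_powerset.2 hS)]
  · rw [if_pos rfl]
  · intro A _ hA
    rw [if_neg hA]

lemma PP_cylinder (D T S : Finset α) (hS : S ⊆ T) (hT : T ⊆ D) :
    PP D p (fun A => A ∩ T = S) = p ^ S.card * (1 - p) ^ (T.card - S.card) := by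
  have hd : Disjoint T (D \ T) := Finset.disjoint_sdiff
  have hun : T ∪ (D \ T) = D := Finset.union_sdiff_of_subset hT
  have := PP_indep (p := p) T (D \ T) hd (fun B => B = S) (fun _ => True)
  rw [hun] at this
  rw [PP_congr D (F := fun A => (A ∩ T = S ∧ True))]
  · rw [this, PP_eq_single T S hS, PP_true, mul_one]
  · intro A _; simp

lemma PP_superset (D S : Finset α) (hS : S ⊆ D) :
    PP D p (fun A => S ⊆ A) = p ^ S.card := by
  have hd : Disjoint S (D \ S) := Finset.disjoint_sdiff
  have hun : S ∪ (D \ S) = D := Finset.union_sdiff_of_subset hS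
  have := PP_indep (p := p) S (D \ S) hd (fun B => B = S) (fun _ => True)
  rw [hun] at this
  rw [PP_congr D (F := fun A => (A ∩ S = S ∧ True))]
  · rw [this, PP_eq_single S S (le_refl S), PP_true, mul_one, Nat.sub_self, pow_zero, mul_one]
  · intro A _
    simp only [and_true]
    exact ⟨Finset.inter_eq_right.2, Finset.inter_eq_right.1⟩

lemma PP_sum_disjoint_le (hp0 : 0 ≤ p) (hp1 : p ≤ 1) (D : Finset α) (E : Finset α → Prop)
    (m : ℕ) (B : ℕ → Finset α → Prop)
    (hdisj : ∀ A, ∀ i < m, ∀ j < m, i ≠ j → ¬ (B i A ∧ B j A))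
    (himp : ∀ i < m, ∀ A, B i A → E A) :
    ∑ i ∈ Finset.range m, PP D p (B i) ≤ PP D p E := by
  unfold PP
  rw [Finset.sum_comm]
  apply Finset.sum_le_sum
  intro A _
  by_cases hE : E A
  · rw [if_pos hE]
    by_cases hex : ∃ i ∈ Finset.range m, B i A
    · obtain ⟨i0, hi0m, hi0⟩ := hex
      rw [Finset.sum_eq_single_of_mem i0 hi0m]
      · rw [if_pos hi0]
      · intro j hj hji
        rw [if_neg]
        intro hBj
        exact hdisj A j (Finset.mem_range.1 hj) i0 (Finset.mem_range.1 hi0m) hji ⟨hBj, hi0⟩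
    · push_neg at hex
      rw [Finset.sum_eq_zero]
      · exact wnn hp0 hp1 _ _
      · intro j hj
        rw [if_neg (hex j hj)]
  · rw [if_neg hE, Finset.sum_eq_zero]
    intro j hj
    rw [if_neg (fun hBj => hE (himp j (Finset.mem_range.1 hj) A hBj))]

lemma PP_indep_family (n : ℕ) (Dom : ℕ → Finset α) (Ev : ℕ → Finset α → Prop)
    (hdisj : ∀ i < n, ∀ j < n, i ≠ j → Disjoint (Dom i) (Dom j)) :
    PP ((Finset.range n).biUnion Dom) p (fun A => ∀ t < n, Ev t (A ∩ Dom t))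
      = ∏ t ∈ Finset.range n, PP (Dom t) p (Ev t) := by
  induction n with
  | zero =>
    rw [PP_congr _ (F := fun _ => True) (fun A _ => by simp), PP_true]
    simp
  | succ n ih =>
    have hsub : ∀ t < n, Dom t ⊆ (Finset.range n).biUnion Dom := by
      intro t ht
      exact Finset.subset_biUnion_of_mem Dom (Finset.mem_range.2 ht)
    have hd : Disjoint ((Finset.range n).biUnion Dom) (Dom n) := by
      rw [Finset.disjoint_biUnion_left]
      intro t ht
      exact hdisj t (Nat.lt_succ_of_lt (Finset.mem_range.1 ht)) n (Nat.lt_succ_self n)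
        (by have := Finset.mem_range.1 ht; omega)
    have hun : (Finset.range (n+1)).biUnion Dom = ((Finset.range n).biUnion Dom) ∪ Dom n := by
      rw [Finset.range_add_one, Finset.biUnion_insert, Finset.union_comm]
    rw [hun]
    have := PP_indep (p := p) ((Finset.range n).biUnion Dom) (Dom n) hd
      (fun B => ∀ t < n, Ev t (B ∩ Dom t)) (Ev n)
    rw [PP_congr _ (F := fun A => (∀ t < n, Ev t ((A ∩ ((Finset.range n).biUnion Dom)) ∩ Dom t)) ∧ Ev n (A ∩ Dom n))]
    · rw [this, ih (fun i hi j hj hij => hdisj i (by omega) j (by omega) hij),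
        Finset.prod_range_succ]
    · intro A _
      constructor
      · intro hA
        constructor
        · intro t ht
          have he : (A ∩ (Finset.range n).biUnion Dom) ∩ Dom t = A ∩ Dom t := by
            rw [Finset.inter_assoc, Finset.inter_eq_right.2 (hsub t ht)]
          rw [he]
          exact hA t (by omega)
        · exact hA n (by omega)
      · rintro ⟨h1, h2⟩ t ht
        rcases Nat.lt_succ_iff_lt_or_eq.1 ht with h | h
        · have := h1 t h
          rwa [Finset.inter_assoc, Finset.inter_eq_right.2 (hsub t h)] at this
        · subst h; exact h2

end ProbCore

section Runs
variable {α : Type*} [DecidableEq α] {p : ℝ}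

/-- The window `{ℓ u, ℓ (u+1), …, ℓ (u+n-1)}`. -/
def segF (ℓ : ℕ → α) (u n : ℕ) : Finset α := (Finset.range n).image (fun k => ℓ (u + k))

/-- There are `s` consecutive elements of `A` within the window starting at `u` of length `n`. -/
def RunIn (ℓ : ℕ → α) (s u n : ℕ) (A : Finset α) : Prop :=
  ∃ j, j + s ≤ n ∧ ∀ k < s, ℓ (u + j + k) ∈ A

lemma segF_card (ℓ : ℕ → α) (hinj : Function.Injective ℓ) (u n : ℕ) :
    (segF ℓ u n).card = n := by
  rw [segF, Finset.card_image_of_injOn (fun x _ y _ hxy => by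
    have := hinj hxy; omega)]
  exact Finset.card_range n

lemma mem_segF {ℓ : ℕ → α} (hinj : Function.Injective ℓ) {u n k : ℕ} :
    ℓ k ∈ segF ℓ u n ↔ u ≤ k ∧ k < u + n := by
  simp only [segF, Finset.mem_image, Finset.mem_range]
  constructor
  · rintro ⟨j, hj, hjk⟩
    have := hinj hjk; omega
  · rintro ⟨h1, h2⟩
    exact ⟨k - u, by omega, by congr 1; omega⟩

lemma PP_run_window (hp0 : 0 ≤ p) (hp1 : p ≤ 1) (ℓ : ℕ → α)
    (hinj : Function.Injective ℓ) (s u n : ℕ) (hsn : s ≤ n) :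
    p ^ s ≤ PP (segF ℓ u n) p (RunIn ℓ s u n) := by
  have hW : (Finset.range s).image (fun k => ℓ (u + k)) ⊆ segF ℓ u n := by
    intro x hx
    simp only [Finset.mem_image, Finset.mem_range] at hx
    obtain ⟨k, hk, rfl⟩ := hx
    exact (mem_segF hinj).2 ⟨by omega, by omega⟩
  have hcard : ((Finset.range s).image (fun k => ℓ (u + k))).card = s := by
    rw [Finset.card_image_of_injOn (fun x _ y _ hxy => by have := hinj hxy; omega)]
    exact Finset.card_range s
  calc p ^ s = p ^ ((Finset.range s).image (fun k => ℓ (u + k))).card := by rw [hcard]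
    _ = PP (segF ℓ u n) p (fun A => (Finset.range s).image (fun k => ℓ (u + k)) ⊆ A) :=
        (PP_superset _ _ hW).symm
    _ ≤ PP (segF ℓ u n) p (RunIn ℓ s u n) := by
        apply PP_mono hp0 hp1
        intro A hA
        refine ⟨0, by omega, fun k hk => ?_⟩
        have : ℓ (u + k) ∈ (Finset.range s).image (fun k => ℓ (u + k)) := by
          simp only [Finset.mem_image, Finset.mem_range]
          exact ⟨k, hk, rfl⟩
        have h2 := hA this
        simpa using h2

lemma segF_union (ℓ : ℕ → α) (u s n : ℕ) (hsn : s ≤ n) :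
    segF ℓ u n = segF ℓ u s ∪ segF ℓ (u + s) (n - s) := by
  ext x
  simp only [Finset.mem_union, segF, Finset.mem_image, Finset.mem_range]
  constructor
  · rintro ⟨k, hk, rfl⟩
    by_cases h : k < s
    · exact Or.inl ⟨k, h, rfl⟩
    · exact Or.inr ⟨k - s, by omega, by congr 1; omega⟩
  · rintro (⟨k, hk, rfl⟩ | ⟨k, hk, rfl⟩)
    · exact ⟨k, by omega, rfl⟩
    · exact ⟨s + k, by omega, by congr 1; omega⟩

lemma norun_base (hp0 : 0 < p) (hp1 : p ≤ 1/2) (s : ℕ) (hs : 1 ≤ s) (n : ℕ)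
    (h1 : s ≤ n) (h2 : n < 2 * s) :
    1 - (p ^ s + (n - s : ℕ) * ((1 - p) * p ^ s)) ≤ Real.exp (-(p ^ s * n / s)) := by
  have hq0 : 0 < p ^ s := pow_pos hp0 s
  have hs0 : (0:ℝ) < (s:ℝ) := by exact_mod_cast hs
  have key : p ^ s * n / s ≤ p ^ s + (n - s : ℕ) * ((1 - p) * p ^ s) := by
    set t : ℝ := ((n - s : ℕ) : ℝ) with ht
    have htn : t = (n:ℝ) - s := by rw [ht, Nat.cast_sub h1]
    have ht0 : (0:ℝ) ≤ t := by rw [ht]; positivity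
    have hts : t / s ≤ t * (1 - p) := by
      rcases Nat.eq_zero_or_pos (n - s) with h | h
      · rw [ht, h]; simp
      · have hs2 : (2:ℝ) ≤ (s:ℝ) := by
          have : 2 ≤ s := by omega
          exact_mod_cast this
        rw [div_eq_mul_inv]
        apply mul_le_mul_of_nonneg_left _ ht0
        have h1s : (s:ℝ)⁻¹ ≤ 1/2 := by
          rw [inv_eq_one_div]
          apply div_le_div_of_nonneg_left _ _ hs2 <;> norm_num
        linarith
    have he : p ^ s * n / s = p ^ s + p ^ s * (t / s) := by
      rw [htn]; field_simp; ring
    have h2' : p ^ s * (t / s) ≤ p ^ s * (t * (1 - p)) :=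
      mul_le_mul_of_nonneg_left hts (le_of_lt hq0)
    rw [he]
    have : p ^ s * (t * (1 - p)) = t * ((1 - p) * p ^ s) := by ring
    linarith [this ▸ h2']
  calc 1 - (p ^ s + (n - s : ℕ) * ((1 - p) * p ^ s)) ≤ 1 - p ^ s * n / s := by linarith
    _ ≤ Real.exp (-(p ^ s * n / s)) := by
        have := Real.add_one_le_exp (-(p ^ s * n / s))
        linarith

end Runs

section RunsMain
variable {α : Type*} [DecidableEq α] {p : ℝ}

lemma PP_B_sum (hp0 : 0 ≤ p) (hp1 : p ≤ 1) (ℓ : ℕ → α) (hinj : Function.Injective ℓ)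
    (s u n : ℕ) (hs : 1 ≤ s) (h1 : s ≤ n) (h2 : n < 2 * s) :
    p ^ s + (n - s : ℕ) * ((1 - p) * p ^ s) ≤ PP (segF ℓ u n) p (RunIn ℓ s u n) := by
  set B : ℕ → Finset α → Prop :=
    fun i A => (∀ k < s, ℓ (u + i + k) ∈ A) ∧ (0 < i → ℓ (u + i - 1) ∉ A) with hB
  have hdisj : ∀ A, ∀ i < n - s + 1, ∀ j < n - s + 1, i ≠ j → ¬ (B i A ∧ B j A) := by
    have key : ∀ A i j, i < j → j < n - s + 1 → ¬ (B i A ∧ B j A) := by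
      rintro A i j hij hj ⟨⟨hBi, _⟩, ⟨_, hBj⟩⟩
      have hk : j - 1 - i < s := by omega
      have := hBi (j - 1 - i) hk
      have he : u + i + (j - 1 - i) = u + j - 1 := by omega
      rw [he] at this
      exact hBj (by omega) this
    intro A i hi j hj hij
    rcases Nat.lt_or_ge i j with h | h
    · exact key A i j h hj
    · have h' : j < i := by omega
      intro ⟨h1', h2'⟩
      exact key A j i h' hi ⟨h2', h1'⟩
  have himp : ∀ i < n - s + 1, ∀ A, B i A → RunIn ℓ s u n A := by
    intro i hi A ⟨hBi, _⟩
    exact ⟨i, by omega, hBi⟩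
  have hsum := PP_sum_disjoint_le hp0 hp1 (segF ℓ u n) (RunIn ℓ s u n) (n - s + 1) B hdisj himp
  have hval : ∑ i ∈ Finset.range (n - s + 1), PP (segF ℓ u n) p (B i)
      = p ^ s + (n - s : ℕ) * ((1 - p) * p ^ s) := by
    rw [Finset.sum_range_succ']
    have hB0 : PP (segF ℓ u n) p (B 0) = p ^ s := by
      have hW : (Finset.range s).image (fun k => ℓ (u + k)) ⊆ segF ℓ u n := by
        intro x hx
        simp only [Finset.mem_image, Finset.mem_range] at hx
        obtain ⟨k, hk, rfl⟩ := hx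
        exact (mem_segF hinj).2 ⟨by omega, by omega⟩
      have hcard : ((Finset.range s).image (fun k => ℓ (u + k))).card = s := by
        rw [Finset.card_image_of_injOn (fun x _ y _ hxy => by have := hinj hxy; omega)]
        exact Finset.card_range s
      rw [PP_congr _ (F := fun A => (Finset.range s).image (fun k => ℓ (u + k)) ⊆ A)]
      · rw [PP_superset _ _ hW, hcard]
      · intro A _
        constructor
        · rintro ⟨hin, _⟩ x hx
          simp only [Finset.mem_image, Finset.mem_range] at hx
          obtain ⟨k, hk, rfl⟩ := hx
          have := hin k hk
          simpa using this
        · intro hsub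
          refine ⟨fun k hk => ?_, fun h0 => absurd h0 (by omega)⟩
          apply hsub
          simp only [Finset.mem_image, Finset.mem_range]
          refine ⟨k, hk, ?_⟩
          have e : u + 0 + k = u + k := by omega
          rw [e]
    have hBsucc : ∀ i < n - s, PP (segF ℓ u n) p (B (i + 1)) = p ^ s * (1 - p) := by
      intro i hi
      set S : Finset α := (Finset.range s).image (fun k => ℓ (u + i + 1 + k)) with hSdef
      set T : Finset α := insert (ℓ (u + i)) S with hTdef
      have hlS : ∀ x ∈ S, ∃ k < s, x = ℓ (u + i + 1 + k) := by
        intro x hx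
        simp only [hSdef, Finset.mem_image, Finset.mem_range] at hx
        obtain ⟨k, hk, rfl⟩ := hx
        exact ⟨k, hk, rfl⟩
      have hnotmem : ℓ (u + i) ∉ S := by
        intro hmem
        obtain ⟨k, hk, hkeq⟩ := hlS _ hmem
        have := hinj hkeq.symm
        omega
      have hScard : S.card = s := by
        rw [hSdef, Finset.card_image_of_injOn (fun x _ y _ hxy => by have := hinj hxy; omega)]
        exact Finset.card_range s
      have hTcard : T.card = s + 1 := by
        rw [hTdef, Finset.card_insert_of_notMem hnotmem, hScard]
      have hTD : T ⊆ segF ℓ u n := by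
        intro x hx
        rcases Finset.mem_insert.1 hx with h | h
        · subst h; exact (mem_segF hinj).2 ⟨by omega, by omega⟩
        · obtain ⟨k, hk, rfl⟩ := hlS _ h
          exact (mem_segF hinj).2 ⟨by omega, by omega⟩
      have hiff : ∀ A ∈ (segF ℓ u n).powerset, (B (i+1) A ↔ A ∩ T = S) := by
        intro A _
        constructor
        · rintro ⟨hin, hout⟩
          have hout' : ℓ (u + i) ∉ A := by
            have := hout (by omega)
            have he : u + (i+1) - 1 = u + i := by omega
            rwa [he] at this
          ext x
          simp only [Finset.mem_inter]
          constructor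
          · rintro ⟨hxA, hxT⟩
            rcases Finset.mem_insert.1 hxT with h | h
            · exact absurd (h ▸ hxA) hout'
            · exact h
          · intro hxS
            obtain ⟨k, hk, rfl⟩ := hlS _ hxS
            have := hin k hk
            have he : u + (i + 1) + k = u + i + 1 + k := by omega
            rw [he] at this
            exact ⟨this, Finset.mem_insert.2 (Or.inr hxS)⟩
        · intro hAT
          have hSA : S ⊆ A := by
            rw [← hAT]; exact Finset.inter_subset_left
          constructor
          · intro k hk
            have : ℓ (u + i + 1 + k) ∈ S := by
              simp only [hSdef, Finset.mem_image, Finset.mem_range]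
              exact ⟨k, hk, rfl⟩
            have he : u + (i + 1) + k = u + i + 1 + k := by omega
            rw [he]
            exact hSA this
          · intro _ hmem
            have he : u + (i+1) - 1 = u + i := by omega
            rw [he] at hmem
            have : ℓ (u + i) ∈ A ∩ T := Finset.mem_inter.2 ⟨hmem, Finset.mem_insert_self _ _⟩
            rw [hAT] at this
            exact hnotmem this
      rw [PP_congr _ hiff, PP_cylinder _ T S (Finset.subset_insert _ _) hTD, hScard, hTcard]
      norm_num
    rw [Finset.sum_congr rfl (fun i hi => hBsucc i (Finset.mem_range.1 hi)), hB0,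
      Finset.sum_const, Finset.card_range]
    push_cast
    ring
  linarith

lemma norun_bound (hp0 : 0 < p) (hp2 : p ≤ 1/2) (ℓ : ℕ → α) (hinj : Function.Injective ℓ)
    (s : ℕ) (hs : 1 ≤ s) :
    ∀ n u, s ≤ n → PP (segF ℓ u n) p (fun A => ¬ RunIn ℓ s u n A)
      ≤ Real.exp (-(p ^ s * n / s)) := by
  have hp1 : p ≤ 1 := by linarith
  have hp0' : 0 ≤ p := le_of_lt hp0
  intro n
  induction n using Nat.strong_induction_on with
  | _ n ih =>
  intro u hn
  by_cases hcase : n < 2 * s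
  · rw [PP_not]
    have hB := PP_B_sum hp0' hp1 ℓ hinj s u n hs hn hcase
    have base := norun_base hp0 hp2 s hs n hn hcase
    linarith
  · push_neg at hcase
    have hsplit := segF_union ℓ u s n hn
    have hd : Disjoint (segF ℓ u s) (segF ℓ (u + s) (n - s)) := by
      rw [Finset.disjoint_left]
      intro x hx1 hx2
      simp only [segF, Finset.mem_image, Finset.mem_range] at hx1
      obtain ⟨k, hk, rfl⟩ := hx1
      have := (mem_segF hinj).1 hx2
      omega
    have hmono : PP (segF ℓ u n) p (fun A => ¬ RunIn ℓ s u n A)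
        ≤ PP (segF ℓ u n) p (fun A => (¬ RunIn ℓ s u s (A ∩ segF ℓ u s))
            ∧ (¬ RunIn ℓ s (u + s) (n - s) (A ∩ segF ℓ (u + s) (n - s)))) := by
      apply PP_mono hp0' hp1
      intro A hA
      constructor
      · rintro ⟨j, hj, hk⟩
        exact hA ⟨j, by omega, fun k hk' => (Finset.mem_inter.1 (hk k hk')).1⟩
      · rintro ⟨j, hj, hk⟩
        refine hA ⟨s + j, by omega, fun k hk' => ?_⟩
        have hmem := (Finset.mem_inter.1 (hk k hk')).1
        have e : u + s + j + k = u + (s + j) + k := by omega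
        rwa [e] at hmem
    rw [hsplit] at hmono
    have hmono2 : PP (segF ℓ u n) p (fun A => ¬ RunIn ℓ s u n A)
        ≤ PP (segF ℓ u s) p (fun A => ¬ RunIn ℓ s u s A)
          * PP (segF ℓ (u + s) (n - s)) p (fun A => ¬ RunIn ℓ s (u + s) (n - s) A) := by
      rw [hsplit]
      exact hmono.trans (le_of_eq (PP_indep _ _ hd
        (fun A => ¬ RunIn ℓ s u s A) (fun A => ¬ RunIn ℓ s (u + s) (n - s) A)))
    have f1 : PP (segF ℓ u s) p (fun A => ¬ RunIn ℓ s u s A) ≤ 1 - p ^ s := by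
      rw [PP_not]
      have := PP_run_window hp0' hp1 ℓ hinj s u s (le_refl s)
      linarith
    have f2 : PP (segF ℓ (u + s) (n - s)) p (fun A => ¬ RunIn ℓ s (u + s) (n - s) A)
        ≤ Real.exp (-(p ^ s * (n - s : ℕ) / s)) := by
      apply ih (n - s) (by omega) (u + s) (by omega)
    have hnn1 : 0 ≤ PP (segF ℓ u s) p (fun A => ¬ RunIn ℓ s u s A) :=
      PP_nonneg hp0' hp1 _ _
    have hnn2 : 0 ≤ PP (segF ℓ (u + s) (n - s)) p (fun A => ¬ RunIn ℓ s (u + s) (n - s) A) :=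
      PP_nonneg hp0' hp1 _ _
    have hprod : PP (segF ℓ u s) p (fun A => ¬ RunIn ℓ s u s A)
        * PP (segF ℓ (u + s) (n - s)) p (fun A => ¬ RunIn ℓ s (u + s) (n - s) A)
        ≤ (1 - p ^ s) * Real.exp (-(p ^ s * (n - s : ℕ) / s)) := by
      apply mul_le_mul f1 f2 hnn2
      have : 0 < p ^ s := pow_pos hp0 s
      linarith
    have hfin : (1 - p ^ s) * Real.exp (-(p ^ s * (n - s : ℕ) / s))
        ≤ Real.exp (-(p ^ s * n / s)) := by
      have h1q : 1 - p ^ s ≤ Real.exp (-(p ^ s)) := by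
        have := Real.add_one_le_exp (-(p ^ s))
        linarith
      calc (1 - p ^ s) * Real.exp (-(p ^ s * (n - s : ℕ) / s))
          ≤ Real.exp (-(p ^ s)) * Real.exp (-(p ^ s * (n - s : ℕ) / s)) := by
            apply mul_le_mul_of_nonneg_right h1q (Real.exp_nonneg _)
        _ = Real.exp (-(p ^ s) + -(p ^ s * (n - s : ℕ) / s)) := (Real.exp_add _ _).symm
        _ = Real.exp (-(p ^ s * n / s)) := by
            congr 1
            have hcast : ((n - s : ℕ) : ℝ) = (n : ℝ) - s := by
              rw [Nat.cast_sub hn]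
            have hs0 : (s:ℝ) ≠ 0 := by
              have : (0:ℝ) < s := by exact_mod_cast hs
              linarith
            rw [hcast]
            field_simp
            ring
    linarith [hmono2]
end RunsMain

section Det

/-- duplicated defs for testing are in partA; in final file they come from the preamble. -/

lemma N3_finite (a b c : ℕ) : (N3 a b c).Finite := by
  apply Set.Finite.subset (Set.finite_Icc ((-(a:ℤ), -(b:ℤ), -(c:ℤ)) : V3) (((a:ℤ), (b:ℤ), (c:ℤ)) : V3))
  intro u hu
  simp only [N3, Set.mem_setOf_eq] at hu
  simp only [Set.mem_Icc, Prod.le_def]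
  obtain ⟨ha1, ha2, ha3⟩ : |u.1| ≤ (a:ℤ) ∧ |u.2.1| ≤ (b:ℤ) ∧ |u.2.2| ≤ (c:ℤ) := by
    rcases hu with ⟨_, h, h3, h4⟩ | ⟨_, h, h3, h4⟩ | ⟨_, h, h3, h4⟩ <;>
      refine ⟨?_, ?_, ?_⟩ <;> simp_all <;> omega
  rw [abs_le] at ha1 ha2 ha3
  exact ⟨⟨ha1.1, ha2.1, ha3.1⟩, ha1.2, ha2.2, ha3.2⟩

lemma step3_subset (a b c r : ℕ) (dom S : Set V3) : S ⊆ step3 a b c r dom S :=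
  Set.subset_union_left

lemma step3_mono (a b c r : ℕ) {dom dom' S S' : Set V3} (hd : dom ⊆ dom') (hS : S ⊆ S') :
    step3 a b c r dom S ⊆ step3 a b c r dom' S' := by
  intro x hx
  rcases hx with hx | hx
  · exact Or.inl (hS hx)
  · refine Or.inr ⟨hd hx.1, le_trans hx.2 ?_⟩
    apply Set.ncard_le_ncard
    · intro u hu; exact ⟨hu.1, hS hu.2⟩
    · exact (N3_finite a b c).subset (fun u hu => hu.1)

lemma closure3_mono (a b c r : ℕ) {dom dom' A A' : Set V3} (hd : dom ⊆ dom')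
    (hA : A ∩ dom ⊆ A' ∩ dom') :
    closure3 a b c r dom A ⊆ closure3 a b c r dom' A' := by
  apply Set.iUnion_subset
  intro n
  apply Set.subset_iUnion_of_subset n
  induction n with
  | zero => exact hA
  | succ n ih =>
    rw [Function.iterate_succ_apply', Function.iterate_succ_apply']
    exact step3_mono a b c r hd ih

lemma subset_closure3 (a b c r : ℕ) (dom A : Set V3) : A ∩ dom ⊆ closure3 a b c r dom A :=
  Set.subset_iUnion_of_subset 0 (le_refl _)

lemma closure3_iter_mono (a b c r : ℕ) (dom A : Set V3) {m n : ℕ} (hmn : m ≤ n) :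
    (step3 a b c r dom)^[m] (A ∩ dom) ⊆ (step3 a b c r dom)^[n] (A ∩ dom) := by
  induction n with
  | zero => rw [Nat.le_zero.1 hmn]
  | succ n ih =>
    rcases Nat.lt_succ_iff_lt_or_eq.1 (Nat.lt_succ_of_le hmn) with h | h
    · refine (ih (by omega)).trans ?_
      rw [Function.iterate_succ_apply']
      exact step3_subset a b c r dom _
    · rw [h]

lemma closure3_closed (a b c r : ℕ) (dom A : Set V3) {x : V3} (hx : x ∈ dom)
    (hcard : r ≤ {u | u ∈ N3 a b c ∧ x + u ∈ closure3 a b c r dom A}.ncard) :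
    x ∈ closure3 a b c r dom A := by
  set T : Set V3 := {u | u ∈ N3 a b c ∧ x + u ∈ closure3 a b c r dom A} with hT
  have hTfin : T.Finite := (N3_finite a b c).subset (fun u hu => hu.1)
  have hch : ∀ u : V3, ∃ n, u ∈ T → x + u ∈ (step3 a b c r dom)^[n] (A ∩ dom) := by
    intro u
    by_cases hu : u ∈ T
    · obtain ⟨s, ⟨n, rfl⟩, hs⟩ := hu.2
      exact ⟨n, fun _ => hs⟩
    · exact ⟨0, fun h => absurd h hu⟩
  choose f hf using hch
  set N := hTfin.toFinset.sup f with hN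
  have hTN : T ⊆ {u | u ∈ N3 a b c ∧ x + u ∈ (step3 a b c r dom)^[N] (A ∩ dom)} := by
    intro u hu
    refine ⟨hu.1, ?_⟩
    have h1 := hf u hu
    have h2 : f u ≤ N := Finset.le_sup (hTfin.mem_toFinset.2 hu)
    exact closure3_iter_mono a b c r dom A h2 h1
  have hcard2 : r ≤ {u | u ∈ N3 a b c ∧ x + u ∈ (step3 a b c r dom)^[N] (A ∩ dom)}.ncard := by
    refine le_trans hcard (Set.ncard_le_ncard hTN ?_)
    exact (N3_finite a b c).subset (fun u hu => hu.1)
  have : x ∈ (step3 a b c r dom)^[N + 1] (A ∩ dom) := by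
    rw [Function.iterate_succ_apply']
    exact Or.inr ⟨hx, hcard2⟩
  exact Set.mem_iUnion.2 ⟨N + 1, this⟩

lemma closure3_congr (a b c r : ℕ) (dom : Set V3) {A A' : Set V3} (h : A ∩ dom = A' ∩ dom) :
    closure3 a b c r dom A = closure3 a b c r dom A' := by
  unfold closure3
  rw [h]

end Det

section Fill

lemma infect_step (a b c r : ℕ) (dom X : Set V3)
    (hX : ∀ v ∈ dom, r ≤ {u | u ∈ N3 a b c ∧ v + u ∈ X}.ncard → v ∈ X)
    (v : V3) (hv : v ∈ dom)
    (U : Finset V3) (hUN : ∀ u ∈ U, u ∈ N3 a b c) (hU3 : ∀ u ∈ U, u.2.2 = 0)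
    (hUX : ∀ u ∈ U, v + u ∈ X)
    (F : Finset ℤ) (hF : ∀ δ ∈ F, δ ≠ 0 ∧ |δ| ≤ (c:ℤ))
    (hFX : ∀ δ ∈ F, (v.1, v.2.1, v.2.2 + δ) ∈ X)
    (hcard : r ≤ U.card + F.card) : v ∈ X := by
  apply hX v hv
  classical
  set W : Finset V3 := U ∪ F.image (fun δ => ((0:ℤ), (0:ℤ), δ)) with hW
  have hWsub : ↑W ⊆ {u | u ∈ N3 a b c ∧ v + u ∈ X} := by
    intro u hu
    simp only [hW, Finset.coe_union, Set.mem_union, Finset.coe_image, Set.mem_image,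
      Finset.mem_coe] at hu
    rcases hu with hu | ⟨δ, hδ, rfl⟩
    · exact ⟨hUN u hu, hUX u hu⟩
    · constructor
      · exact Or.inr (Or.inr ⟨(hF δ hδ).1, (hF δ hδ).2, rfl, rfl⟩)
      · have he : v + ((0:ℤ), (0:ℤ), δ) = (v.1, v.2.1, v.2.2 + δ) := by
          refine Prod.ext ?_ (Prod.ext ?_ ?_) <;> simp
        rw [he]
        exact hFX δ hδ
  have hdisj : Disjoint U (F.image (fun δ => ((0:ℤ), (0:ℤ), δ))) := by
    rw [Finset.disjoint_right]
    intro u hu hu'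
    simp only [Finset.mem_image] at hu
    obtain ⟨δ, hδ, rfl⟩ := hu
    have h3 := hU3 _ hu'
    simp only at h3
    exact (hF δ hδ).1 h3
  have hWcard : W.card = U.card + F.card := by
    rw [hW, Finset.card_union_of_disjoint hdisj, Finset.card_image_of_injective]
    intro x y hxy
    simpa using congrArg (fun t : V3 => t.2.2) hxy
  calc r ≤ U.card + F.card := hcard
    _ = W.card := hWcard.symm
    _ = (↑W : Set V3).ncard := (Set.ncard_coe_finset W).symm
    _ ≤ _ := Set.ncard_le_ncard hWsub ((N3_finite a b c).subset (fun u hu => hu.1))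

lemma fill_line (a b c r : ℕ) (dom X : Set V3)
    (hX : ∀ v ∈ dom, r ≤ {u | u ∈ N3 a b c ∧ v + u ∈ X}.ncard → v ∈ X)
    (w : ℕ) (x0 y0 : ℤ) (s : ℕ) (hs1 : 1 ≤ s) (hsc : s ≤ c)
    (hdom : ∀ z : ℤ, 1 ≤ z → z ≤ (w:ℤ) → ((x0, y0, z) : V3) ∈ dom)
    (U : Finset V3) (hUN : ∀ u ∈ U, u ∈ N3 a b c) (hU3 : ∀ u ∈ U, u.2.2 = 0)
    (hUcard : r ≤ U.card + s)
    (hhelp : ∀ u ∈ U, ∀ z : ℤ, 1 ≤ z → z ≤ (w:ℤ) → ((x0, y0, z) : V3) + u ∈ X)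
    (z0 : ℤ) (hz0 : 1 ≤ z0) (hz0w : z0 + s ≤ (w:ℤ) + 1)
    (hrun : ∀ k : ℕ, k < s → ((x0, y0, z0 + k) : V3) ∈ X) :
    ∀ z : ℤ, 1 ≤ z → z ≤ (w:ℤ) → ((x0, y0, z) : V3) ∈ X := by
  have hsw : z0 ≤ (w:ℤ) := by
    have : (1:ℤ) ≤ s := by exact_mod_cast hs1
    omega
  -- downward extension: for every d, if z0 - d ≥ 1 then the whole window
  -- [z0 - d, z0 - d + s - 1] is in X
  have down : ∀ d : ℕ, 1 ≤ z0 - d → ∀ k : ℕ, k < s → ((x0, y0, z0 - d + k) : V3) ∈ X := by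
    intro d
    induction d with
    | zero =>
      intro _ k hk
      rw [show z0 - ((0:ℕ):ℤ) + (k:ℤ) = z0 + k by push_cast; ring]
      exact hrun k hk
    | succ d ih =>
      intro hd1 k hk
      have hd1' : 1 ≤ z0 - ((d:ℤ) + 1) := by push_cast at hd1; exact hd1
      have hd0 : 1 ≤ z0 - (d:ℤ) := by omega
      rcases Nat.eq_zero_or_pos k with rfl | hkpos
      · rw [show z0 - ((d+1:ℕ):ℤ) + ((0:ℕ):ℤ) = z0 - (d:ℤ) - 1 by push_cast; ring]
        set z : ℤ := z0 - (d:ℤ) - 1 with hz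
        have hz1 : 1 ≤ z := by omega
        have hzw : z ≤ (w:ℤ) := by omega
        apply infect_step a b c r dom X hX ((x0, y0, z) : V3) (hdom z hz1 hzw) U hUN hU3
          (fun u hu => hhelp u hu z hz1 hzw) (Finset.Icc (1:ℤ) (s:ℤ))
        · intro δ hδ
          rw [Finset.mem_Icc] at hδ
          constructor
          · omega
          · rw [abs_le]
            have : (s:ℤ) ≤ (c:ℤ) := by exact_mod_cast hsc
            omega
        · intro δ hδ
          rw [Finset.mem_Icc] at hδ
          show ((x0, y0, z + δ) : V3) ∈ X
          have e : z + δ = z0 - (d:ℤ) + ((δ - 1).toNat : ℤ) := by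
            rw [Int.toNat_of_nonneg (by omega)]; omega
          rw [e]
          apply ih hd0
          have : ((δ - 1).toNat : ℤ) < (s:ℤ) := by
            rw [Int.toNat_of_nonneg (by omega)]; omega
          exact_mod_cast this
        · rw [Int.card_Icc]
          have : ((s:ℤ) + 1 - 1).toNat = s := by omega
          rw [this]
          exact hUcard
      · rw [show z0 - ((d+1:ℕ):ℤ) + (k:ℤ) = z0 - (d:ℤ) + ((k-1:ℕ):ℤ) by
          push_cast [Nat.cast_sub hkpos]; ring]
        exact ih hd0 (k-1) (by omega)
  -- upward extension
  have up : ∀ d : ℕ, z0 + s + d ≤ (w:ℤ) + 1 → ∀ k : ℕ, k < s → ((x0, y0, z0 + d + k) : V3) ∈ X := by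
    intro d
    induction d with
    | zero =>
      intro _ k hk
      rw [show z0 + ((0:ℕ):ℤ) + (k:ℤ) = z0 + k by push_cast; ring]
      exact hrun k hk
    | succ d ih =>
      intro hd1 k hk
      have hd1' : z0 + (s:ℤ) + (d:ℤ) + 1 ≤ (w:ℤ) + 1 := by push_cast at hd1; omega
      have hd0 : z0 + (s:ℤ) + (d:ℤ) ≤ (w:ℤ) + 1 := by omega
      by_cases hktop : k + 1 < s
      · rw [show z0 + ((d+1:ℕ):ℤ) + (k:ℤ) = z0 + (d:ℤ) + ((k+1:ℕ):ℤ) by push_cast; ring]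
        exact ih hd0 (k+1) hktop
      · have hks : k = s - 1 := by omega
        subst hks
        rw [show z0 + ((d+1:ℕ):ℤ) + ((s-1:ℕ):ℤ) = z0 + (d:ℤ) + (s:ℤ) by
          push_cast [Nat.cast_sub hs1]; ring]
        set z : ℤ := z0 + (d:ℤ) + (s:ℤ) with hz
        have hz1 : 1 ≤ z := by
          have : (0:ℤ) ≤ s := by exact_mod_cast Nat.zero_le s
          omega
        have hzw : z ≤ (w:ℤ) := by omega
        apply infect_step a b c r dom X hX ((x0, y0, z) : V3) (hdom z hz1 hzw) U hUN hU3
          (fun u hu => hhelp u hu z hz1 hzw) (Finset.Icc (-(s:ℤ)) (-1))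
        · intro δ hδ
          rw [Finset.mem_Icc] at hδ
          constructor
          · omega
          · rw [abs_le]
            have : (s:ℤ) ≤ (c:ℤ) := by exact_mod_cast hsc
            omega
        · intro δ hδ
          rw [Finset.mem_Icc] at hδ
          show ((x0, y0, z + δ) : V3) ∈ X
          have e : z + δ = z0 + (d:ℤ) + (((s:ℤ) + δ).toNat : ℤ) := by
            rw [Int.toNat_of_nonneg (by omega)]; omega
          rw [e]
          apply ih hd0
          have : (((s:ℤ) + δ).toNat : ℤ) < (s:ℤ) := by
            rw [Int.toNat_of_nonneg (by omega)]; omega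
          exact_mod_cast this
        · rw [Int.card_Icc]
          have : ((-1:ℤ) + 1 - -(s:ℤ)).toNat = s := by omega
          rw [this]
          exact hUcard
  -- conclusion
  intro z hz1 hzw
  rcases lt_or_ge z z0 with h | h
  · have e : z = z0 - ((z0 - z).toNat : ℤ) + ((0:ℕ):ℤ) := by
      rw [Int.toNat_of_nonneg (by omega)]; push_cast; ring
    rw [e]
    apply down (z0 - z).toNat
    · rw [Int.toNat_of_nonneg (by omega)]; omega
    · omega
  · rcases lt_or_ge z (z0 + s) with h2 | h2
    · have e : z = z0 + (((z - z0).toNat : ℕ) : ℤ) := by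
        rw [Int.toNat_of_nonneg (by omega)]; ring
      rw [e]
      apply hrun
      have : (((z - z0).toNat : ℕ) : ℤ) < (s:ℤ) := by
        rw [Int.toNat_of_nonneg (by omega)]; omega
      exact_mod_cast this
    · have e : z = z0 + (((z - z0 - s + 1).toNat : ℕ) : ℤ) + ((s-1:ℕ):ℤ) := by
        rw [Int.toNat_of_nonneg (by omega)]
        push_cast [Nat.cast_sub hs1]
        omega
      rw [e]
      apply up
      · rw [Int.toNat_of_nonneg (by omega)]; omega
      · omega
end Fill

section Grow

lemma mem_rect {x y z : ℕ} {v : V3} : v ∈ rect x y z ↔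
    (1 ≤ v.1 ∧ v.1 ≤ (x:ℤ) ∧ 1 ≤ v.2.1 ∧ v.2.1 ≤ (y:ℤ) ∧ 1 ≤ v.2.2 ∧ v.2.2 ≤ (z:ℤ)) := by
  obtain ⟨v1, v2, v3⟩ := v
  simp [rect, rectF, Finset.mem_coe, Finset.mem_product, Finset.mem_Icc, and_assoc,
    Prod.le_def]
  omega

/-- The line `{(x0, y0, z) : z ∈ ℤ}` indexed by `ℕ`. -/
def lineMap (x0 y0 : ℤ) : ℕ → V3 := fun k => (x0, y0, (k:ℤ))

lemma lineMap_inj (x0 y0 : ℤ) : Function.Injective (lineMap x0 y0) := by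
  intro i j hij
  have := congrArg (fun t : V3 => t.2.2) hij
  simpa [lineMap] using this

lemma inj_me1 : Function.Injective (fun i : ℕ => ((-(i:ℤ), (0:ℤ), (0:ℤ)) : V3)) := by
  intro i j hij
  have := congrArg (fun t : V3 => t.1) hij
  simp only [neg_inj, Nat.cast_inj] at this
  exact this

lemma inj_me2 : Function.Injective (fun j : ℕ => (((0:ℤ), -(j:ℤ), (0:ℤ)) : V3)) := by
  intro i j hij
  have := congrArg (fun t : V3 => t.2.1) hij
  simp only [neg_inj, Nat.cast_inj] at this
  exact this

lemma inj_pe2 : Function.Injective (fun j : ℕ => (((0:ℤ), (j:ℤ), (0:ℤ)) : V3)) := by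
  intro i j hij
  have := congrArg (fun t : V3 => t.2.1) hij
  simp only [Nat.cast_inj] at this
  exact this

lemma grow (a b c r h w : ℕ) (ha : 1 ≤ a) (hab : a ≤ b) (hbc : b ≤ c)
    (hr1 : a + b + 1 ≤ r) (hr2 : r ≤ a + c) (hch : c ≤ h) (hcw : c ≤ w)
    (A : Finset V3)
    (h0 : IFill a b c r (rect h h w) A)
    (hface2 : ∀ x : ℕ, 1 ≤ x → x ≤ h →
      RunIn (lineMap (x:ℤ) ((h:ℤ)+1)) (r - b - min a (x-1)) 1 w A)
    (hcorner : RunIn (lineMap ((h:ℤ)+1) ((h:ℤ)+1)) (r - a) 1 w A)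
    (hface1 : ∀ g : ℕ, g ≤ h - 1 →
      RunIn (lineMap ((h:ℤ)+1) ((h:ℤ)-g)) (r - a - min b (g+1)) 1 w A) :
    IFill a b c r (rect (h+1) (h+1) w) A := by
  set dom := rect (h+1) (h+1) w with hdomdef
  set X := closure3 a b c r dom ↑A with hXdef
  have hX : ∀ v ∈ dom, r ≤ {u | u ∈ N3 a b c ∧ v + u ∈ X}.ncard → v ∈ X :=
    fun v hv hc => closure3_closed a b c r dom ↑A hv hc
  have hah : a ≤ h := le_trans (le_trans hab hbc) hch
  have hbh : b ≤ h := le_trans hbc hch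
  have h1h : 1 ≤ h := le_trans ha hah
  have hblock : rect h h w ⊆ X := by
    intro v hv
    apply closure3_mono a b c r (dom' := dom) (A' := ↑A) ?_ ?_ (h0 hv)
    · intro u hu
      rw [mem_rect] at hu
      show u ∈ rect (h+1) (h+1) w
      rw [mem_rect]
      push_cast at hu ⊢
      omega
    · intro u hu
      refine ⟨hu.1, ?_⟩
      have h2 := hu.2
      rw [mem_rect] at h2
      show u ∈ rect (h+1) (h+1) w
      rw [mem_rect]
      push_cast at h2 ⊢
      omega
  have hrunX : ∀ (x0 y0 : ℤ) (s : ℕ), 1 ≤ x0 → x0 ≤ (h:ℤ)+1 → 1 ≤ y0 → y0 ≤ (h:ℤ)+1 →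
      RunIn (lineMap x0 y0) s 1 w A →
      ∃ z0 : ℤ, 1 ≤ z0 ∧ z0 + s ≤ (w:ℤ) + 1 ∧ ∀ k : ℕ, k < s → ((x0, y0, z0 + k) : V3) ∈ X := by
    rintro x0 y0 s hx1 hx2 hy1 hy2 ⟨j, hj, hk⟩
    refine ⟨1 + (j:ℤ), by omega, by push_cast; omega, fun k hkk => ?_⟩
    have he : ((x0, y0, 1 + (j:ℤ) + (k:ℤ)) : V3) = lineMap x0 y0 (1 + j + k) := by
      simp only [lineMap]
      refine Prod.ext rfl (Prod.ext rfl ?_)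
      push_cast; ring
    rw [he]
    apply subset_closure3 a b c r dom ↑A
    constructor
    · exact hk k hkk
    · rw [hdomdef]
      simp only [lineMap]
      rw [mem_rect]
      push_cast
      refine ⟨hx1, hx2, hy1, hy2, by omega, by omega⟩
  have hlinedom : ∀ (x0 y0 : ℤ), 1 ≤ x0 → x0 ≤ (h:ℤ)+1 → 1 ≤ y0 → y0 ≤ (h:ℤ)+1 →
      ∀ z : ℤ, 1 ≤ z → z ≤ (w:ℤ) → ((x0, y0, z) : V3) ∈ dom := by
    intro x0 y0 hx1 hx2 hy1 hy2 z hz1 hz2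
    rw [hdomdef, mem_rect]
    push_cast
    exact ⟨hx1, hx2, hy1, hy2, hz1, hz2⟩
  -- face 2 : lines (x, h+1, ⬝) for 1 ≤ x ≤ h
  have C2 : ∀ x : ℕ, 1 ≤ x → x ≤ h →
      ∀ z : ℤ, 1 ≤ z → z ≤ (w:ℤ) → (((x:ℤ), (h:ℤ)+1, z) : V3) ∈ X := by
    intro x
    induction x using Nat.strong_induction_on with
    | _ x ih =>
    intro hx1 hxh
    have hs1 : 1 ≤ r - b - min a (x-1) := by omega
    have hsc : r - b - min a (x-1) ≤ c := by omega
    set U : Finset V3 := ((Finset.Icc 1 b).image fun j : ℕ => (((0:ℤ), -(j:ℤ), (0:ℤ)) : V3))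
      ∪ ((Finset.Icc 1 (min a (x-1))).image fun i : ℕ => ((-(i:ℤ), (0:ℤ), (0:ℤ)) : V3)) with hUdef
    have hdisjU : Disjoint ((Finset.Icc 1 b).image fun j : ℕ => (((0:ℤ), -(j:ℤ), (0:ℤ)) : V3))
        ((Finset.Icc 1 (min a (x-1))).image fun i : ℕ => ((-(i:ℤ), (0:ℤ), (0:ℤ)) : V3)) := by
      rw [Finset.disjoint_left]
      intro u hu hu'
      simp only [Finset.mem_image, Finset.mem_Icc] at hu hu'
      obtain ⟨j, hj, rfl⟩ := hu
      obtain ⟨i, hi, hij⟩ := hu'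
      have h2 := congrArg (fun t : V3 => t.2.1) hij
      simp only at h2
      omega
    have hUcard : U.card = b + min a (x-1) := by
      rw [hUdef, Finset.card_union_of_disjoint hdisjU,
        Finset.card_image_of_injective _ inj_me2, Finset.card_image_of_injective _ inj_me1,
        Nat.card_Icc, Nat.card_Icc]
      omega
    obtain ⟨z0, hz01, hz0w, hz0run⟩ := hrunX (x:ℤ) ((h:ℤ)+1) (r - b - min a (x-1))
      (by exact_mod_cast hx1) (by push_cast; omega) (by omega) (by omega)
      (hface2 x hx1 hxh)
    exact fill_line a b c r dom X hX w (x:ℤ) ((h:ℤ)+1) (r - b - min a (x-1)) hs1 hsc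
      (hlinedom _ _ (by exact_mod_cast hx1) (by push_cast; omega) (by omega) (by omega))
      U
      (by -- hUN
        intro u hu
        rw [hUdef] at hu
        rcases Finset.mem_union.1 hu with hu | hu <;>
          simp only [Finset.mem_image, Finset.mem_Icc] at hu
        · obtain ⟨j, hj, rfl⟩ := hu
          refine Or.inr (Or.inl ⟨by simp; omega, ?_, rfl, rfl⟩)
          simp only [abs_neg, Int.abs_natCast]
          exact_mod_cast hj.2
        · obtain ⟨i, hi, rfl⟩ := hu
          refine Or.inl ⟨by simp; omega, ?_, rfl, rfl⟩
          simp only [abs_neg, Int.abs_natCast]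
          push_cast
          omega)
      (by -- hU3
        intro u hu
        rw [hUdef] at hu
        rcases Finset.mem_union.1 hu with hu | hu <;>
          simp only [Finset.mem_image, Finset.mem_Icc] at hu <;>
          [obtain ⟨j, hj, rfl⟩ := hu; obtain ⟨i, hi, rfl⟩ := hu] <;> rfl)
      (by rw [hUcard]; omega)
      (by -- hhelp
        intro u hu z hz1 hz2
        rw [hUdef] at hu
        rcases Finset.mem_union.1 hu with hu | hu <;>
          simp only [Finset.mem_image, Finset.mem_Icc] at hu
        · obtain ⟨j, hj, rfl⟩ := hu
          have he : (((x:ℤ), (h:ℤ)+1, z) : V3) + ((0:ℤ), -(j:ℤ), (0:ℤ))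
              = (((x:ℤ), (h:ℤ)+1-(j:ℤ), z) : V3) := by
            refine Prod.ext ?_ (Prod.ext ?_ ?_) <;> simp <;> ring
          rw [he]
          apply hblock
          rw [mem_rect]
          push_cast
          refine ⟨by omega, by omega, by omega, by omega, hz1, hz2⟩
        · obtain ⟨i, hi, rfl⟩ := hu
          have he : (((x:ℤ), (h:ℤ)+1, z) : V3) + ((-(i:ℤ)), (0:ℤ), (0:ℤ))
              = ((((x - i : ℕ):ℤ), (h:ℤ)+1, z) : V3) := by
            refine Prod.ext ?_ (Prod.ext ?_ ?_) <;> simp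
            push_cast [Nat.cast_sub (by omega : i ≤ x)]
            ring
          rw [he]
          exact ih (x - i) (by omega) (by omega) (by omega) z hz1 hz2)
      z0 hz01 hz0w hz0run
  -- corner line (h+1, h+1, ⬝)
  have Cc : ∀ z : ℤ, 1 ≤ z → z ≤ (w:ℤ) → (((h:ℤ)+1, (h:ℤ)+1, z) : V3) ∈ X := by
    have hs1 : 1 ≤ r - a := by omega
    have hsc : r - a ≤ c := by omega
    obtain ⟨z0, hz01, hz0w, hz0run⟩ := hrunX ((h:ℤ)+1) ((h:ℤ)+1) (r - a)
      (by omega) (by omega) (by omega) (by omega) hcorner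
    exact fill_line a b c r dom X hX w ((h:ℤ)+1) ((h:ℤ)+1) (r - a) hs1 hsc
      (hlinedom _ _ (by omega) (by omega) (by omega) (by omega))
      ((Finset.Icc 1 a).image fun i : ℕ => ((-(i:ℤ), (0:ℤ), (0:ℤ)) : V3))
      (by intro u hu
          simp only [Finset.mem_image, Finset.mem_Icc] at hu
          obtain ⟨i, hi, rfl⟩ := hu
          refine Or.inl ⟨by simp; omega, ?_, rfl, rfl⟩
          simp only [abs_neg, Int.abs_natCast]
          exact_mod_cast hi.2)
      (by intro u hu
          simp only [Finset.mem_image, Finset.mem_Icc] at hu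
          obtain ⟨i, hi, rfl⟩ := hu
          rfl)
      (by rw [Finset.card_image_of_injective _ inj_me1, Nat.card_Icc]; omega)
      (by intro u hu z hz1 hz2
          simp only [Finset.mem_image, Finset.mem_Icc] at hu
          obtain ⟨i, hi, rfl⟩ := hu
          have he : (((h:ℤ)+1, (h:ℤ)+1, z) : V3) + ((-(i:ℤ)), (0:ℤ), (0:ℤ))
              = ((((h + 1 - i : ℕ):ℤ), (h:ℤ)+1, z) : V3) := by
            refine Prod.ext ?_ (Prod.ext ?_ ?_) <;> simp
            push_cast [Nat.cast_sub (by omega : i ≤ h + 1)]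
            ring
          rw [he]
          exact C2 (h + 1 - i) (by omega) (by omega) z hz1 hz2)
      z0 hz01 hz0w hz0run
  -- face 1 : lines (h+1, h-g, ⬝) for 0 ≤ g ≤ h-1
  have C1 : ∀ g : ℕ, g ≤ h - 1 →
      ∀ z : ℤ, 1 ≤ z → z ≤ (w:ℤ) → (((h:ℤ)+1, (h:ℤ)-(g:ℤ), z) : V3) ∈ X := by
    intro g
    induction g using Nat.strong_induction_on with
    | _ g ih =>
    intro hgh
    have hs1 : 1 ≤ r - a - min b (g+1) := by omega
    have hsc : r - a - min b (g+1) ≤ c := by omega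
    set U : Finset V3 := ((Finset.Icc 1 a).image fun i : ℕ => ((-(i:ℤ), (0:ℤ), (0:ℤ)) : V3))
      ∪ ((Finset.Icc 1 (min b (g+1))).image fun j : ℕ => (((0:ℤ), (j:ℤ), (0:ℤ)) : V3)) with hUdef
    have hdisjU : Disjoint ((Finset.Icc 1 a).image fun i : ℕ => ((-(i:ℤ), (0:ℤ), (0:ℤ)) : V3))
        ((Finset.Icc 1 (min b (g+1))).image fun j : ℕ => (((0:ℤ), (j:ℤ), (0:ℤ)) : V3)) := by
      rw [Finset.disjoint_left]
      intro u hu hu'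
      simp only [Finset.mem_image, Finset.mem_Icc] at hu hu'
      obtain ⟨i, hi, rfl⟩ := hu
      obtain ⟨j, hj, hij⟩ := hu'
      have h2 := congrArg (fun t : V3 => t.1) hij
      simp only at h2
      omega
    have hUcard : U.card = a + min b (g+1) := by
      rw [hUdef, Finset.card_union_of_disjoint hdisjU,
        Finset.card_image_of_injective _ inj_me1, Finset.card_image_of_injective _ inj_pe2,
        Nat.card_Icc, Nat.card_Icc]
      omega
    obtain ⟨z0, hz01, hz0w, hz0run⟩ := hrunX ((h:ℤ)+1) ((h:ℤ)-(g:ℤ)) (r - a - min b (g+1))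
      (by omega) (by omega) (by omega) (by omega) (hface1 g hgh)
    exact fill_line a b c r dom X hX w ((h:ℤ)+1) ((h:ℤ)-(g:ℤ)) (r - a - min b (g+1)) hs1 hsc
      (hlinedom _ _ (by omega) (by omega) (by omega) (by omega))
      U
      (by intro u hu
          rw [hUdef] at hu
          rcases Finset.mem_union.1 hu with hu | hu <;>
            simp only [Finset.mem_image, Finset.mem_Icc] at hu
          · obtain ⟨i, hi, rfl⟩ := hu
            refine Or.inl ⟨by simp; omega, ?_, rfl, rfl⟩
            simp only [abs_neg, Int.abs_natCast]
            exact_mod_cast hi.2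
          · obtain ⟨j, hj, rfl⟩ := hu
            refine Or.inr (Or.inl ⟨by simp; omega, ?_, rfl, rfl⟩)
            simp only [Int.abs_natCast]
            push_cast
            omega)
      (by intro u hu
          rw [hUdef] at hu
          rcases Finset.mem_union.1 hu with hu | hu <;>
            simp only [Finset.mem_image, Finset.mem_Icc] at hu <;>
            [obtain ⟨i, hi, rfl⟩ := hu; obtain ⟨j, hj, rfl⟩ := hu] <;> rfl)
      (by rw [hUcard]; omega)
      (by intro u hu z hz1 hz2
          rw [hUdef] at hu
          rcases Finset.mem_union.1 hu with hu | hu <;>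
            simp only [Finset.mem_image, Finset.mem_Icc] at hu
          · obtain ⟨i, hi, rfl⟩ := hu
            have he : (((h:ℤ)+1, (h:ℤ)-(g:ℤ), z) : V3) + ((-(i:ℤ)), (0:ℤ), (0:ℤ))
                = ((((h + 1 - i : ℕ):ℤ), (h:ℤ)-(g:ℤ), z) : V3) := by
              refine Prod.ext ?_ (Prod.ext ?_ ?_) <;> simp
              push_cast [Nat.cast_sub (by omega : i ≤ h + 1)]
              ring
            rw [he]
            apply hblock
            rw [mem_rect]
            push_cast [Nat.cast_sub (by omega : i ≤ h + 1)]
            refine ⟨by omega, by omega, by omega, by omega, hz1, hz2⟩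
          · obtain ⟨j, hj, rfl⟩ := hu
            by_cases hcorner_case : j = g + 1
            · have he : (((h:ℤ)+1, (h:ℤ)-(g:ℤ), z) : V3) + ((0:ℤ), (j:ℤ), (0:ℤ))
                  = (((h:ℤ)+1, (h:ℤ)+1, z) : V3) := by
                refine Prod.ext ?_ (Prod.ext ?_ ?_) <;> simp
                subst hcorner_case
                push_cast
                ring
              rw [he]
              exact Cc z hz1 hz2
            · have hjg : j ≤ g := by omega
              have he : (((h:ℤ)+1, (h:ℤ)-(g:ℤ), z) : V3) + ((0:ℤ), (j:ℤ), (0:ℤ))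
                  = (((h:ℤ)+1, (h:ℤ)-(((g - j : ℕ):ℕ):ℤ), z) : V3) := by
                refine Prod.ext ?_ (Prod.ext ?_ ?_) <;> simp
                push_cast [Nat.cast_sub hjg]
                ring
              rw [he]
              exact ih (g - j) (by omega) (by omega) z hz1 hz2)
      z0 hz01 hz0w hz0run
  -- assemble
  intro v hv
  obtain ⟨vx, vy, vz⟩ := v
  rw [mem_rect] at hv
  dsimp only at hv
  push_cast at hv
  obtain ⟨hx1, hx2, hy1, hy2, hz1, hz2⟩ := hv
  show ((vx, vy, vz) : V3) ∈ X
  rcases lt_or_ge vx ((h:ℤ)+1) with hx | hx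
  · rcases lt_or_ge vy ((h:ℤ)+1) with hy | hy
    · apply hblock
      rw [mem_rect]
      dsimp only
      exact ⟨hx1, by omega, hy1, by omega, hz1, hz2⟩
    · have hyv : vy = (h:ℤ)+1 := by omega
      have hxv : vx = ((vx.toNat : ℕ) : ℤ) := by rw [Int.toNat_of_nonneg (by omega)]
      rw [hyv, hxv]
      apply C2 vx.toNat (by omega) (by omega) vz hz1 hz2
  · have hxv : vx = (h:ℤ)+1 := by omega
    rcases lt_or_ge vy ((h:ℤ)+1) with hy | hy
    · have hyv : vy = (h:ℤ) - (((h:ℤ) - vy).toNat : ℤ) := by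
        rw [Int.toNat_of_nonneg (by omega)]; ring
      rw [hxv, hyv]
      apply C1 ((h:ℤ) - vy).toNat (by omega) vz hz1 hz2
    · have hyv : vy = (h:ℤ)+1 := by omega
      rw [hxv, hyv]
      exact Cc vz hz1 hz2

end Grow

section Glue

lemma mem_lineSeg {x0 y0 : ℤ} {w : ℕ} {v : V3} :
    v ∈ segF (lineMap x0 y0) 1 w ↔ (v.1 = x0 ∧ v.2.1 = y0 ∧ 1 ≤ v.2.2 ∧ v.2.2 ≤ (w:ℤ)) := by
  simp only [segF, lineMap, Finset.mem_image, Finset.mem_range]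
  constructor
  · rintro ⟨k, hk, rfl⟩
    refine ⟨rfl, rfl, ?_, ?_⟩ <;> simp <;> push_cast <;> omega
  · rintro ⟨h1, h2, h3, h4⟩
    obtain ⟨v1, v2, v3⟩ := v
    simp only at h1 h2 h3 h4
    subst h1; subst h2
    refine ⟨(v3 - 1).toNat, ?_, ?_⟩
    · omega
    · have : ((1 + (v3-1).toNat : ℕ) : ℤ) = v3 := by
        push_cast
        rw [Int.toNat_of_nonneg (by omega)]
        omega
      rw [show ((1 + (v3-1).toNat : ℕ) : ℤ) = v3 from this]

lemma RunIn_mono_size {α : Type*} [DecidableEq α] {ℓ : ℕ → α} {s s' u n : ℕ} {A : Finset α}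
    (h : s ≤ s') (hr : RunIn ℓ s' u n A) : RunIn ℓ s u n A := by
  obtain ⟨j, hj, hk⟩ := hr
  exact ⟨j, by omega, fun k hk' => hk k (by omega)⟩

lemma RunIn_mono_set {α : Type*} [DecidableEq α] {ℓ : ℕ → α} {s u n : ℕ} {A B : Finset α}
    (h : A ⊆ B) (hr : RunIn ℓ s u n A) : RunIn ℓ s u n B := by
  obtain ⟨j, hj, hk⟩ := hr
  exact ⟨j, hj, fun k hk' => h (hk k hk')⟩

lemma PP_runline {p : ℝ} (hp0 : 0 < p) (hp2 : p ≤ 1/2) (x0 y0 : ℤ) (s w : ℕ)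
    (hs : 1 ≤ s) (hsw : s ≤ w) :
    1 - Real.exp (-(p ^ s * w / s)) ≤ PP (segF (lineMap x0 y0) 1 w) p (RunIn (lineMap x0 y0) s 1 w) := by
  have h := norun_bound hp0 hp2 (lineMap x0 y0) (lineMap_inj x0 y0) s hs w 1 hsw
  have h2 := PP_not (p := p) (segF (lineMap x0 y0) 1 w) (RunIn (lineMap x0 y0) s 1 w)
  linarith

/-- the (x,y)-coordinates of the `t`-th boundary line. -/
def lineOf (h t : ℕ) : ℤ × ℤ :=
  if t ≤ h then ((t:ℤ), (h:ℤ)+1)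
  else (((h:ℤ)+1), if t = h+1 then (h:ℤ)+1 else ((t - (h+1) : ℕ):ℤ))

noncomputable def DomT (h w t : ℕ) : Finset V3 :=
  if t = 0 then rectF h h w else segF (lineMap (lineOf h t).1 (lineOf h t).2) 1 w

def sfun (a b r h t : ℕ) : ℕ :=
  if t ≤ h then r - b - min a (t-1) else if t = h+1 then r - a else r - a - min b (2*h + 2 - t)

def EvT (a b c r h w t : ℕ) (A : Finset V3) : Prop :=
  if t = 0 then IFill a b c r (rect h h w) A
  else RunIn (lineMap (lineOf h t).1 (lineOf h t).2) (sfun a b r h t) 1 w A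

lemma mem_DomT_line {h w t : ℕ} (ht1 : 1 ≤ t) {v : V3} :
    v ∈ DomT h w t ↔ (v.1 = (lineOf h t).1 ∧ v.2.1 = (lineOf h t).2 ∧ 1 ≤ v.2.2 ∧ v.2.2 ≤ (w:ℤ)) := by
  rw [DomT, if_neg (by omega), mem_lineSeg]

lemma DomT_disjoint (h w : ℕ) {i j : ℕ} (hi : i < 2*h+2) (hj : j < 2*h+2) (hij : i ≠ j) :
    Disjoint (DomT h w i) (DomT h w j) := by
  rw [Finset.disjoint_left]
  intro v hvi hvj
  -- helper facts about coordinates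
  have key : ∀ t, 1 ≤ t → t < 2*h+2 → ∀ u : V3, u ∈ DomT h w t →
      (u.2.1 = (h:ℤ)+1 ∧ u.1 = (t:ℤ) ∧ t ≤ h) ∨
      (u.1 = (h:ℤ)+1 ∧ u.2.1 = (h:ℤ)+1 ∧ t = h+1) ∨
      (u.1 = (h:ℤ)+1 ∧ u.2.1 = ((t - (h+1) : ℕ):ℤ) ∧ h+2 ≤ t) := by
    intro t ht1 ht2 u hu
    rw [mem_DomT_line ht1] at hu
    obtain ⟨h1, h2, _, _⟩ := hu
    unfold lineOf at h1 h2
    by_cases hth : t ≤ h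
    · rw [if_pos hth] at h1 h2
      exact Or.inl ⟨h2, h1, hth⟩
    · rw [if_neg hth] at h1 h2
      by_cases hth1 : t = h+1
      · rw [if_pos hth1] at h2
        exact Or.inr (Or.inl ⟨h1, h2, hth1⟩)
      · rw [if_neg hth1] at h2
        exact Or.inr (Or.inr ⟨h1, h2, by omega⟩)
  rcases Nat.eq_zero_or_pos i with rfl | hi1
  · have hj1 : 1 ≤ j := by omega
    have hv0 : v ∈ rectF h h w := by rwa [DomT, if_pos rfl] at hvi
    have hvb : v.1 ≤ (h:ℤ) ∧ v.2.1 ≤ (h:ℤ) := by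
      have := mem_rect.1 (by exact_mod_cast hv0)
      exact ⟨this.2.1, this.2.2.2.1⟩
    rcases key j hj1 hj v hvj with ⟨h1, _, _⟩ | ⟨h1, _, _⟩ | ⟨h1, _, _⟩ <;> omega
  · rcases Nat.eq_zero_or_pos j with rfl | hj1
    · have hv0 : v ∈ rectF h h w := by rwa [DomT, if_pos rfl] at hvj
      have hvb : v.1 ≤ (h:ℤ) ∧ v.2.1 ≤ (h:ℤ) := by
        have := mem_rect.1 (by exact_mod_cast hv0)
        exact ⟨this.2.1, this.2.2.2.1⟩
      rcases key i hi1 hi v hvi with ⟨h1, _, _⟩ | ⟨h1, _, _⟩ | ⟨h1, _, _⟩ <;> omega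
    · rcases key i hi1 hi v hvi with ⟨h1, h2, h3⟩ | ⟨h1, h2, h3⟩ | ⟨h1, h2, h3⟩ <;>
        rcases key j hj1 hj v hvj with ⟨g1, g2, g3⟩ | ⟨g1, g2, g3⟩ | ⟨g1, g2, g3⟩ <;>
        omega

lemma DomT_biUnion (h w : ℕ) (h1h : 1 ≤ h) :
    (Finset.range (2*h+2)).biUnion (DomT h w) = rectF (h+1) (h+1) w := by
  ext v
  simp only [Finset.mem_biUnion, Finset.mem_range]
  constructor
  · rintro ⟨t, ht, hv⟩
    have : v ∈ rect (h+1) (h+1) w := by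
      rcases Nat.eq_zero_or_pos t with rfl | ht1
      · rw [DomT, if_pos rfl] at hv
        have := mem_rect.1 (by exact_mod_cast hv)
        rw [mem_rect]
        push_cast at this ⊢
        omega
      · rw [mem_DomT_line ht1] at hv
        obtain ⟨h1, h2, h3, h4⟩ := hv
        unfold lineOf at h1 h2
        rw [mem_rect]
        push_cast
        by_cases hth : t ≤ h
        · rw [if_pos hth] at h1 h2
          constructor
          · rw [h1]; push_cast; omega
          refine ⟨by rw [h1]; push_cast; omega, by omega, by omega, h3, h4⟩
        · rw [if_neg hth] at h1 h2
          by_cases hth1 : t = h+1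
          · rw [if_pos hth1] at h2
            refine ⟨by omega, by omega, by omega, by omega, h3, h4⟩
          · rw [if_neg hth1] at h2
            refine ⟨by omega, by omega, ?_, ?_, h3, h4⟩
            · rw [h2]; push_cast; omega
            · rw [h2]; push_cast; omega
    exact_mod_cast this
  · intro hv
    have hv' := mem_rect.1 (by exact_mod_cast hv : v ∈ rect (h+1) (h+1) w)
    push_cast at hv'
    obtain ⟨hx1, hx2, hy1, hy2, hz1, hz2⟩ := hv'
    rcases lt_or_ge v.1 ((h:ℤ)+1) with hx | hx
    · rcases lt_or_ge v.2.1 ((h:ℤ)+1) with hy | hy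
      · refine ⟨0, by omega, ?_⟩
        rw [DomT, if_pos rfl]
        have : v ∈ rect h h w := by
          rw [mem_rect]; push_cast; exact ⟨hx1, by omega, hy1, by omega, hz1, hz2⟩
        exact_mod_cast this
      · -- face 2 : t = v.1
        refine ⟨v.1.toNat, by omega, ?_⟩
        rw [mem_DomT_line (by omega)]
        unfold lineOf
        rw [if_pos (by omega)]
        refine ⟨by simp [Int.toNat_of_nonneg (by omega : (0:ℤ) ≤ v.1)], by omega, hz1, hz2⟩
    · rcases lt_or_ge v.2.1 ((h:ℤ)+1) with hy | hy
      · -- face 1 : t = h+1+v.2.1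
        refine ⟨h + 1 + v.2.1.toNat, by omega, ?_⟩
        rw [mem_DomT_line (by omega)]
        unfold lineOf
        rw [if_neg (by omega), if_neg (by omega)]
        refine ⟨by omega, ?_, hz1, hz2⟩
        have : h + 1 + v.2.1.toNat - (h+1) = v.2.1.toNat := by omega
        rw [this]
        simp [Int.toNat_of_nonneg (by omega : (0:ℤ) ≤ v.2.1)]
      · -- corner
        refine ⟨h + 1, by omega, ?_⟩
        rw [mem_DomT_line (by omega)]
        unfold lineOf
        rw [if_neg (by omega), if_pos rfl]
        exact ⟨by omega, by omega, hz1, hz2⟩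

end Glue

section Main

lemma IFill_restrict (a b c r h w : ℕ) (A : Finset V3) :
    IFill a b c r (rect h h w) (A ∩ rectF h h w) ↔ IFill a b c r (rect h h w) A := by
  unfold IFill
  rw [closure3_congr a b c r (rect h h w) (A := (↑(A ∩ rectF h h w) : Set V3)) (A' := (↑A : Set V3))]
  rw [Finset.coe_inter]
  show (↑A ∩ rect h h w) ∩ rect h h w = ↑A ∩ rect h h w
  rw [Set.inter_assoc, Set.inter_self]

lemma EvT_implies (a b c r h w : ℕ) (ha : 1 ≤ a) (hab : a ≤ b) (hbc : b ≤ c)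
    (hr1 : a + b + 1 ≤ r) (hr2 : r ≤ a + c) (hch : c ≤ h) (hcw : c ≤ w)
    (A : Finset V3)
    (hall : ∀ t < 2*h+2, EvT a b c r h w t (A ∩ DomT h w t)) :
    IFill a b c r (rect (h+1) (h+1) w) A ∧ IFill a b c r (rect h h w) A := by
  have h1h : 1 ≤ h := le_trans (le_trans (le_trans ha hab) hbc) hch
  have hsmall : IFill a b c r (rect h h w) A := by
    have h0 := hall 0 (by omega)
    rw [EvT, if_pos rfl] at h0
    rw [show DomT h w 0 = rectF h h w from by rw [DomT, if_pos rfl]] at h0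
    exact (IFill_restrict a b c r h w A).1 h0
  refine ⟨?_, hsmall⟩
  apply grow a b c r h w ha hab hbc hr1 hr2 hch hcw A hsmall
  · -- face 2
    intro x hx1 hxh
    have ht := hall x (by omega)
    rw [EvT, if_neg (by omega)] at ht
    have hline : lineOf h x = ((x:ℤ), (h:ℤ)+1) := by rw [lineOf, if_pos hxh]
    have hsf : sfun a b r h x = r - b - min a (x - 1) := by rw [sfun, if_pos hxh]
    rw [hline, hsf] at ht
    exact RunIn_mono_set Finset.inter_subset_left ht
  · -- corner
    have ht := hall (h+1) (by omega)
    rw [EvT, if_neg (by omega)] at ht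
    have hline : lineOf h (h+1) = ((h:ℤ)+1, (h:ℤ)+1) := by
      rw [lineOf, if_neg (by omega), if_pos rfl]
    have hsf : sfun a b r h (h+1) = r - a := by
      rw [sfun, if_neg (by omega), if_pos rfl]
    rw [hline, hsf] at ht
    exact RunIn_mono_set Finset.inter_subset_left ht
  · -- face 1
    intro g hg
    set t := h + 1 + (h - g) with htdef
    have ht := hall t (by omega)
    rw [EvT, if_neg (by omega)] at ht
    have hline : lineOf h t = ((h:ℤ)+1, (h:ℤ)-(g:ℤ)) := by
      rw [lineOf, if_neg (by omega), if_neg (by omega)]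
      have e1 : t - (h+1) = h - g := by omega
      rw [e1]
      have e2 : ((h - g : ℕ) : ℤ) = (h:ℤ) - (g:ℤ) := by
        push_cast [Nat.cast_sub (by omega : g ≤ h)]
        ring
      rw [e2]
    have hsf : sfun a b r h t = r - a - min b (g + 1) := by
      rw [sfun, if_neg (by omega), if_neg (by omega)]
      have : 2*h + 2 - t = g + 1 := by omega
      rw [this]
    rw [hline, hsf] at ht
    exact RunIn_mono_set Finset.inter_subset_left ht

lemma PP_den (a b c r h w : ℕ) (p : ℝ) (h1h : 1 ≤ h) :
    PP (rectF (h+1) (h+1) w) p (IFill a b c r (rect h h w))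
      = PP (rectF h h w) p (IFill a b c r (rect h h w)) := by
  rw [← DomT_biUnion h w h1h]
  have hfam := PP_indep_family (p := p) (2*h+2) (DomT h w)
    (fun t => if t = 0 then IFill a b c r (rect h h w) else fun _ => True)
    (fun i hi j hj hij => DomT_disjoint h w hi hj hij)
  rw [PP_congr _ (F := fun A => ∀ t < 2*h+2,
      (if t = 0 then IFill a b c r (rect h h w) else fun _ => True) (A ∩ DomT h w t))]
  · rw [hfam]
    rw [Finset.prod_eq_single_of_mem 0 (Finset.mem_range.2 (by omega))]
    · rw [if_pos rfl, show DomT h w 0 = rectF h h w from by rw [DomT, if_pos rfl]]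
    · intro t _ ht0
      rw [if_neg ht0, PP_true]
  · intro A _
    constructor
    · intro hI t ht
      by_cases ht0 : t = 0
      · subst ht0
        rw [if_pos rfl, show DomT h w 0 = rectF h h w from by rw [DomT, if_pos rfl]]
        exact (IFill_restrict a b c r h w A).2 hI
      · rw [if_neg ht0]
        trivial
    · intro hall
      have h0 := hall 0 (by omega)
      rw [if_pos rfl, show DomT h w 0 = rectF h h w from by rw [DomT, if_pos rfl]] at h0
      exact (IFill_restrict a b c r h w A).1 h0

end Main

/-- **Lemma 2.5 (Critical faces).** For `N_r^{a,b,c}`-bootstrap percolation with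
`a+b+1 ≤ r ≤ a+c`, setting `m = r − (a+b) ≥ 1`, for `h, w ≥ c` and `p` small enough,
`ℙ_p(I(h+1, w) | I(h, w)) ≥ (1 − e^{−p^{r−a} w/(r−a)})^r (1 − e^{−p^m w/m})^{2h}`. -/
theorem statement6 (a b c r : ℕ) (ha : 1 ≤ a) (hab : a ≤ b) (hbc : b ≤ c)
    (hr1 : a + b + 1 ≤ r) (hr2 : r ≤ a + c) :
    ∃ p₀ : ℝ, 0 < p₀ ∧ ∀ p : ℝ, 0 < p → p < p₀ → ∀ h w : ℕ, c ≤ h → c ≤ w →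
      (1 - Real.exp (-(p ^ (r - a) * (w : ℝ) / ((r - a : ℕ) : ℝ)))) ^ r *
        (1 - Real.exp (-(p ^ (r - (a + b)) * (w : ℝ) / ((r - (a + b) : ℕ) : ℝ)))) ^ (2 * h) ≤
        PPc (rectF (h + 1) (h + 1) w) p
          (IFill a b c r (rect (h + 1) (h + 1) w))
          (IFill a b c r (rect h h w)) := by
  refine ⟨1/2, by norm_num, ?_⟩
  intro p hp0 hpp h w hch hcw
  have hp2 : p ≤ 1/2 := le_of_lt hpp
  have hp1 : p ≤ 1 := by linarith
  have hp0' : 0 ≤ p := le_of_lt hp0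
  have h1h : 1 ≤ h := by omega
  have h1w : 1 ≤ w := by omega
  set ra := r - a with hra
  set m := r - (a + b) with hm
  have hm1 : 1 ≤ m := by omega
  have hra1 : 1 ≤ ra := by omega
  have hrac : ra ≤ c := by omega
  set T1 : ℝ := 1 - Real.exp (-(p ^ ra * (w:ℝ) / ((ra : ℕ) : ℝ))) with hT1
  set T2 : ℝ := 1 - Real.exp (-(p ^ m * (w:ℝ) / ((m : ℕ) : ℝ))) with hT2
  have hT1nn : 0 ≤ T1 := by
    have hx : (0:ℝ) ≤ p ^ ra * (w:ℝ) / ((ra : ℕ) : ℝ) := by positivity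
    have hle : Real.exp (-(p ^ ra * (w:ℝ) / ((ra : ℕ) : ℝ))) ≤ Real.exp 0 :=
      Real.exp_le_exp.2 (by linarith)
    rw [Real.exp_zero] at hle
    rw [hT1]; linarith
  have hT2nn : 0 ≤ T2 := by
    have hx : (0:ℝ) ≤ p ^ m * (w:ℝ) / ((m : ℕ) : ℝ) := by positivity
    have hle : Real.exp (-(p ^ m * (w:ℝ) / ((m : ℕ) : ℝ))) ≤ Real.exp 0 :=
      Real.exp_le_exp.2 (by linarith)
    rw [Real.exp_zero] at hle
    rw [hT2]; linarith
  have hT1le : T1 ≤ 1 := by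
    have := Real.exp_nonneg (-(p ^ ra * (w:ℝ) / ((ra : ℕ) : ℝ)))
    rw [hT1]; linarith
  have hT2le : T2 ≤ 1 := by
    have := Real.exp_nonneg (-(p ^ m * (w:ℝ) / ((m : ℕ) : ℝ)))
    rw [hT2]; linarith
  -- lower bound for each boundary line
  have hline : ∀ t, 1 ≤ t → t ≤ 2*h+1 →
      (if (a+1 ≤ t ∧ t ≤ h) ∨ (h+2 ≤ t ∧ t ≤ 2*h+2-b) then T2 else T1)
        ≤ PP (DomT h w t) p (EvT a b c r h w t) := by
    intro t ht1 ht2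
    have ht0 : ¬ (t = 0) := by omega
    have hDeq : DomT h w t = segF (lineMap (lineOf h t).1 (lineOf h t).2) 1 w := by
      rw [DomT, if_neg ht0]
    have hEeq : ∀ A ∈ (segF (lineMap (lineOf h t).1 (lineOf h t).2) 1 w).powerset,
        (EvT a b c r h w t A ↔
          RunIn (lineMap (lineOf h t).1 (lineOf h t).2) (sfun a b r h t) 1 w A) := by
      intro A _; rw [EvT, if_neg ht0]
    rw [hDeq, PP_congr _ hEeq]
    have hsle : sfun a b r h t ≤ ra := by rw [sfun, hra]; split_ifs <;> omega
    have hs1 : 1 ≤ sfun a b r h t := by rw [sfun]; split_ifs <;> omega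
    by_cases hcond : (a+1 ≤ t ∧ t ≤ h) ∨ (h+2 ≤ t ∧ t ≤ 2*h+2-b)
    · rw [if_pos hcond]
      have hsm : sfun a b r h t = m := by rw [sfun, hm]; split_ifs <;> omega
      rw [hT2, hsm]
      exact PP_runline hp0 hp2 _ _ m w hm1 (by omega)
    · rw [if_neg hcond, hT1]
      calc 1 - Real.exp (-(p ^ ra * (w:ℝ) / ((ra : ℕ) : ℝ)))
          ≤ PP (segF (lineMap (lineOf h t).1 (lineOf h t).2) 1 w) p
              (RunIn (lineMap (lineOf h t).1 (lineOf h t).2) ra 1 w) :=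
            PP_runline hp0 hp2 _ _ ra w hra1 (by omega)
        _ ≤ _ := PP_mono hp0' hp1 _ (fun A hA => RunIn_mono_size hsle hA)
  -- the product over all lines
  set G : ℕ → ℝ := fun t =>
    if (a+1 ≤ t ∧ t ≤ h) ∨ (h+2 ≤ t ∧ t ≤ 2*h+2-b) then T2 else T1 with hG
  have hGnn : ∀ t, 0 ≤ G t := by
    intro t; rw [hG]; dsimp only; split_ifs
    exacts [hT2nn, hT1nn]
  have hLG : ∏ t ∈ Finset.Ico 1 (2*h+2), G t
      ≤ ∏ t ∈ Finset.Ico 1 (2*h+2), PP (DomT h w t) p (EvT a b c r h w t) := by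
    apply Finset.prod_le_prod (fun t _ => hGnn t)
    intro t ht
    have h' := Finset.mem_Ico.1 ht
    exact hline t (by omega) (by omega)
  have hGprod : ∏ t ∈ Finset.Ico 1 (2*h+2), G t = T1 ^ (a+b) * T2 ^ (2*h+1-(a+b)) := by
    rw [← Finset.prod_Ico_consecutive G (by omega : (1:ℕ) ≤ a+1) (by omega : a+1 ≤ 2*h+2),
      ← Finset.prod_Ico_consecutive G (by omega : a+1 ≤ h+1) (by omega : h+1 ≤ 2*h+2),
      ← Finset.prod_Ico_consecutive G (by omega : h+1 ≤ h+2) (by omega : h+2 ≤ 2*h+2),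
      ← Finset.prod_Ico_consecutive G (by omega : h+2 ≤ 2*h+3-b) (by omega : 2*h+3-b ≤ 2*h+2)]
    have c1 : ∏ t ∈ Finset.Ico 1 (a+1), G t = T1 ^ a := by
      rw [Finset.prod_congr rfl (g := fun _ => T1) (fun t ht => by
        have h' := Finset.mem_Ico.1 ht
        rw [hG]; dsimp only; rw [if_neg (by omega)]), Finset.prod_const, Nat.card_Ico]
      congr 1 <;> omega
    have c2 : ∏ t ∈ Finset.Ico (a+1) (h+1), G t = T2 ^ (h-a) := by
      rw [Finset.prod_congr rfl (g := fun _ => T2) (fun t ht => by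
        have h' := Finset.mem_Ico.1 ht
        rw [hG]; dsimp only; rw [if_pos (by omega)]), Finset.prod_const, Nat.card_Ico]
      congr 1 <;> omega
    have c3 : ∏ t ∈ Finset.Ico (h+1) (h+2), G t = T1 ^ 1 := by
      rw [Finset.prod_congr rfl (g := fun _ => T1) (fun t ht => by
        have h' := Finset.mem_Ico.1 ht
        rw [hG]; dsimp only; rw [if_neg (by omega)]), Finset.prod_const, Nat.card_Ico]
      congr 1 <;> omega
    have c4 : ∏ t ∈ Finset.Ico (h+2) (2*h+3-b), G t = T2 ^ (h+1-b) := by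
      rw [Finset.prod_congr rfl (g := fun _ => T2) (fun t ht => by
        have h' := Finset.mem_Ico.1 ht
        rw [hG]; dsimp only; rw [if_pos (by omega)]), Finset.prod_const, Nat.card_Ico]
      congr 1 <;> omega
    have c5 : ∏ t ∈ Finset.Ico (2*h+3-b) (2*h+2), G t = T1 ^ (b-1) := by
      rw [Finset.prod_congr rfl (g := fun _ => T1) (fun t ht => by
        have h' := Finset.mem_Ico.1 ht
        rw [hG]; dsimp only; rw [if_neg (by omega)]), Finset.prod_const, Nat.card_Ico]
      congr 1 <;> omega
    rw [c1, c2, c3, c4, c5]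
    have e1 : a + b = a + (1 + (b-1)) := by omega
    have e2 : 2*h+1-(a+b) = (h-a) + (h+1-b) := by omega
    rw [e2, e1, pow_add, pow_add, pow_add]
    ring
  -- the independent-family identity for the numerator
  have hfam := PP_indep_family (p := p) (2*h+2) (DomT h w) (EvT a b c r h w)
    (fun i hi j hj hij => DomT_disjoint h w hi hj hij)
  rw [DomT_biUnion h w h1h] at hfam
  have hsplit0 : ∏ t ∈ Finset.range (2*h+2), PP (DomT h w t) p (EvT a b c r h w t)
      = PP (rectF h h w) p (IFill a b c r (rect h h w))
        * ∏ t ∈ Finset.Ico 1 (2*h+2), PP (DomT h w t) p (EvT a b c r h w t) := by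
    rw [Finset.range_eq_Ico,
      ← Finset.prod_Ico_consecutive _ (by omega : (0:ℕ) ≤ 1) (by omega : 1 ≤ 2*h+2)]
    congr 1
    have hIco01 : Finset.Ico 0 1 = {0} := by
      ext x; simp [Finset.mem_Ico, Nat.lt_one_iff]
    rw [hIco01, Finset.prod_singleton,
      show DomT h w 0 = rectF h h w from by rw [DomT, if_pos rfl]]
    apply PP_congr
    intro A _
    rw [EvT, if_pos rfl]
  have hPP0pos : 0 < PP (rectF h h w) p (IFill a b c r (rect h h w)) := by
    have hfull : IFill a b c r (rect h h w) (rectF h h w) := by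
      intro v hv
      apply subset_closure3
      exact ⟨hv, hv⟩
    have hterm := PP_ge_term hp0' hp1 (rectF h h w) (IFill a b c r (rect h h w))
      (rectF h h w) (le_refl _) hfull
    have hpos : (0:ℝ) < p ^ (rectF h h w).card
        * (1-p) ^ ((rectF h h w).card - (rectF h h w).card) := by
      rw [Nat.sub_self, pow_zero, mul_one]
      exact pow_pos hp0 _
    linarith
  have hnum1 : PP (rectF (h+1) (h+1) w) p
        (fun A => ∀ t < 2*h+2, EvT a b c r h w t (A ∩ DomT h w t))
      ≤ PP (rectF (h+1) (h+1) w) p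
        (fun A => IFill a b c r (rect (h+1) (h+1) w) A ∧ IFill a b c r (rect h h w) A) :=
    PP_mono hp0' hp1 _
      (fun A hall => EvT_implies a b c r h w ha hab hbc hr1 hr2 hch hcw A hall)
  have hfinal : T1 ^ r * T2 ^ (2*h) ≤ T1 ^ (a+b) * T2 ^ (2*h+1-(a+b)) := by
    apply mul_le_mul
    · exact pow_le_pow_of_le_one hT1nn hT1le (by omega)
    · exact pow_le_pow_of_le_one hT2nn hT2le (by omega)
    · exact pow_nonneg hT2nn _
    · exact pow_nonneg hT1nn _
  -- assemble
  show T1 ^ r * T2 ^ (2*h) ≤ _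
  unfold PPc
  rw [PP_den a b c r h w p h1h]
  rw [le_div_iff₀ hPP0pos]
  calc T1 ^ r * T2 ^ (2*h) * PP (rectF h h w) p (IFill a b c r (rect h h w))
      = PP (rectF h h w) p (IFill a b c r (rect h h w)) * (T1 ^ r * T2 ^ (2*h)) := by ring
    _ ≤ PP (rectF h h w) p (IFill a b c r (rect h h w))
        * ∏ t ∈ Finset.Ico 1 (2*h+2), PP (DomT h w t) p (EvT a b c r h w t) := by
        apply mul_le_mul_of_nonneg_left _ (le_of_lt hPP0pos)
        calc T1 ^ r * T2 ^ (2*h) ≤ T1 ^ (a+b) * T2 ^ (2*h+1-(a+b)) := hfinal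
          _ = ∏ t ∈ Finset.Ico 1 (2*h+2), G t := hGprod.symm
          _ ≤ _ := hLG
    _ = ∏ t ∈ Finset.range (2*h+2), PP (DomT h w t) p (EvT a b c r h w t) := hsplit0.symm
    _ = PP (rectF (h+1) (h+1) w) p
        (fun A => ∀ t < 2*h+2, EvT a b c r h w t (A ∩ DomT h w t)) := hfam.symm
    _ ≤ _ := hnum1
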